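/- arXiv:2212.02460 — 9 statements merged into one kernel-verified Lean document; each statement's English description precedes it below -/
import Mathlib

section
/- Let K be an infinite field of characteristic p, let μ : K → K be a field automorphism, and let n, m be positive integers prime to p. If x^n = μ(x)^m for all x ∈ K*, then n = m. -/
open Polynomial

lemma aux_dvd {K : Type*} [Field K] {n m : ℕ} (hn : 0 < n) (hm : 0 < m)
    (hnK : (n : K) ≠ 0)
    (H : ((X : K[X]) ^ m + 1) ^ n = ((X : K[X]) ^ n + 1) ^ m) : n ∣ m := by
  by_contra hnd
  have hL : (((X : K[X]) ^ m + 1) ^ n).coeff m = (n : K) := by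
    rw [add_pow]
    simp only [one_pow, mul_one, ← pow_mul, finset_sum_coeff, coeff_mul_natCast,
      coeff_X_pow]
    rw [Finset.sum_eq_single 1]
    · simp [hm.ne']
    · intro i hi hne
      have : m * i ≠ m := by
        intro hc
        exact hne (Nat.eq_of_mul_eq_mul_left hm (by omega))
      simp only [coeff_X_pow, ite_mul, one_mul, zero_mul, ite_eq_right_iff]
      exact fun hc => absurd hc.symm this
    · intro hc
      simp at hc
      omega
  have hR : (((X : K[X]) ^ n + 1) ^ m).coeff m = 0 := by
    rw [add_pow]
    simp only [one_pow, mul_one, ← pow_mul, finset_sum_coeff, coeff_mul_natCast,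
      coeff_X_pow]
    apply Finset.sum_eq_zero
    intro j hj
    have : n * j ≠ m := fun hc => hnd ⟨j, hc.symm⟩
    simp only [coeff_X_pow, ite_mul, one_mul, zero_mul, ite_eq_right_iff]
    exact fun hc => absurd hc.symm this
  rw [H, hR] at hL
  exact hnK hL.symm

/-- Let `K` be an infinite field of characteristic `p`, `μ` a field automorphism
of `K`, and `n, m` positive integers prime to `p`.  If `x^n = μ(x)^m` for all
nonzero `x`, then `n = m`. -/
theorem stmt_1 {K : Type*} [Field K] [Infinite K] (μ : K ≃+* K) (n m : ℕ)
    (hn : 0 < n) (hm : 0 < m) (hpn : ¬ (ringChar K ∣ n)) (hpm : ¬ (ringChar K ∣ m))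
    (h : ∀ x : K, x ≠ 0 → x ^ n = μ x ^ m) : n = m := by
  have hnK : (n : K) ≠ 0 := fun hc => hpn ((CharP.cast_eq_zero_iff K (ringChar K) n).mp hc)
  have hmK : (m : K) ≠ 0 := fun hc => hpm ((CharP.cast_eq_zero_iff K (ringChar K) m).mp hc)
  -- μ (x^m) = x^n for all x
  have key : ∀ x : K, μ (x ^ m) = x ^ n := by
    intro x
    rcases eq_or_ne x 0 with rfl | hx
    · simp [zero_pow hn.ne', zero_pow hm.ne']
    · rw [map_pow, ← h x hx]
  -- element-level identity
  have elt : ∀ u : K, (u ^ m + 1) ^ n = (u ^ n + 1) ^ m := by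
    intro u
    have h1 : (u ^ n + 1) ^ m = μ ((u ^ m + 1) ^ m) := by
      rw [map_pow, map_add, map_one, key u]
    rw [h1, ← key (u ^ m + 1)]
  -- polynomial identity
  have poly : ((X : K[X]) ^ m + 1) ^ n = ((X : K[X]) ^ n + 1) ^ m := by
    apply Polynomial.funext
    intro u
    simpa using elt u
  exact Nat.dvd_antisymm (aux_dvd hn hm hnK poly) (aux_dvd hm hn hmK poly.symm)
end

section
/- Let V be a finite-dimensional vector space over an algebraically closed field K, and let h, u ∈ GL(V) with u of infinite order and h u h⁻¹ = u^(2^k) for some k ≥ 1. Then every eigenvalue of u is a root of unity of odd order. -/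
/-- Let `V` be a finite-dimensional vector space over an algebraically closed
field `K`, and `h, u` invertible endomorphisms of `V` with `u` of infinite
order and `h * u * h⁻¹ = u ^ (2^k)` for some `k ≥ 1`.  Then every eigenvalue
of `u` is a root of unity of odd order. -/
theorem stmt_2 {K V : Type*} [Field K] [IsAlgClosed K] [AddCommGroup V]
    [Module K V] [FiniteDimensional K V] (h u : (Module.End K V)ˣ)
    (hu : ¬ IsOfFinOrder u) (k : ℕ) (hk : 1 ≤ k)
    (hconj : h * u * h⁻¹ = u ^ (2 ^ k)) :
    ∀ c : K, Module.End.HasEigenvalue (u : Module.End K V) c →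
      ∃ d : ℕ, Odd d ∧ c ^ d = 1 := by
  intro c hc
  set S : Set K := spectrum K (u : Module.End K V) with hS
  have hsc : c ∈ S := Module.End.hasEigenvalue_iff_mem_spectrum.mp hc
  -- the spectral mapping theorem + conjugation invariance: S = (·^(2^k)) '' S
  have hpowval : ((h : Module.End K V) * u * ↑h⁻¹) = (u : Module.End K V) ^ (2 ^ k) := by
    rw [← Units.val_pow_eq_pow_val, ← hconj]; simp
  have hspec : S = (· ^ (2 ^ k)) '' S := by
    conv_lhs => rw [hS, ← spectrum.units_conjugate (u := h) (a := (u : Module.End K V)),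
      hpowval, spectrum.map_pow_of_pos _ (pow_pos (by norm_num) k)]
  have surj : ∀ b ∈ S, ∃ a ∈ S, a ^ (2 ^ k) = b := by
    intro b hb
    rw [hspec] at hb
    obtain ⟨a, ha, hab⟩ := hb
    exact ⟨a, ha, hab⟩
  -- pull back c arbitrarily many times
  have seq : ∀ n : ℕ, ∃ a ∈ S, a ^ (2 ^ (k * n)) = c := by
    intro n
    induction n with
    | zero => exact ⟨c, hsc, by simp⟩
    | succ n ih =>
      obtain ⟨a, ha, hac⟩ := ih
      obtain ⟨b, hb, hba⟩ := surj a ha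
      refine ⟨b, hb, ?_⟩
      rw [Nat.mul_succ, pow_add, mul_comm, pow_mul, hba, hac]
  choose F hFmem hFpow using seq
  -- pigeonhole: S is finite
  have hfin : S.Finite := Module.End.finite_spectrum _
  have : Finite S := hfin.to_subtype
  obtain ⟨m, n, hmn, heq⟩ := Finite.exists_ne_map_eq_of_infinite
    (fun i : ℕ => (⟨F i, hFmem i⟩ : S))
  wlog hlt : m < n generalizing m n
  · exact this n m (Ne.symm hmn) heq.symm (by omega)
  have hFeq : F m = F n := congrArg Subtype.val heq
  -- c ≠ 0
  have hc0 : c ≠ 0 := by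
    intro h0
    exact spectrum.zero_notMem K u.isUnit (h0 ▸ hsc)
  -- compute: c ^ (2^(k*(n-m))) = c
  have key : c ^ (2 ^ (k * (n - m))) = c := by
    have h1 : (F m) ^ (2 ^ (k * m)) = c := hFpow m
    have h2 : (F m) ^ (2 ^ (k * n)) = c := hFeq ▸ hFpow n
    calc c ^ (2 ^ (k * (n - m))) = ((F m) ^ (2 ^ (k * m))) ^ (2 ^ (k * (n - m))) := by rw [h1]
    _ = (F m) ^ (2 ^ (k * m) * 2 ^ (k * (n - m))) := (pow_mul _ _ _).symm
    _ = (F m) ^ (2 ^ (k * n)) := by congr 1; rw [← pow_add, ← Nat.mul_add, Nat.add_sub_cancel' hlt.le]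
    _ = c := h2
  refine ⟨2 ^ (k * (n - m)) - 1, ?_, ?_⟩
  · have ht : 1 ≤ k * (n - m) := by
      have : 1 ≤ n - m := by omega
      nlinarith
    have h2 : 2 ≤ 2 ^ (k * (n - m)) :=
      calc 2 = 2 ^ 1 := rfl
      _ ≤ 2 ^ (k * (n - m)) := Nat.pow_le_pow_right (by norm_num) ht
    exact Nat.Even.sub_odd (by omega) (Nat.even_pow.mpr ⟨even_two, by omega⟩) odd_one
  · have hM : 1 ≤ 2 ^ (k * (n - m)) := Nat.one_le_two_pow
    have hsucc : 2 ^ (k * (n - m)) - 1 + 1 = 2 ^ (k * (n - m)) := by omega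
    refine mul_right_cancel₀ hc0 ?_
    rw [← pow_succ, hsucc, key, one_mul]
end

section
/- Let Γ be a group such that the centralizer of any nontrivial normal subgroup of Γ is trivial. If Γ embeds into GL(n,R) for some commutative ring R, then Γ embeds into GL(n,K) for some field K. -/
/-!
Choose, by Zorn's lemma, an ideal `I` maximal among those modulo which `ρ` stays injective;
chains are fine because lying in the kernel of reduction mod `I` is a condition on finitely many
matrix entries. Such an `I` is prime: if `ab ∈ I` with `a, b ∉ I`, the kernels of reduction
mod `I + (a)` and mod `I + (b)` are nontrivial normal subgroups, and they commute elementwise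
modulo `I`, hence commute, because `(ρ x - 1)(ρ y - 1)` has entries in `(I + (a))(I + (b)) ⊆ I`.
Then `Γ` embeds into `GL(n)` of the fraction field of `R ⧸ I`.
-/

open Matrix
open scoped commutatorElement

namespace Ideal

variable {R ι : Type*} [CommRing R] [Fintype ι] [DecidableEq ι]

theorem mul_mem_matrix_mul {I J : Ideal R} {M N : Matrix ι ι R}
    (hM : M ∈ I.matrix ι) (hN : N ∈ J.matrix ι) : M * N ∈ (I * J).matrix ι := fun i j =>
  Ideal.sum_mem _ fun k _ => mul_mem_mul (hM i k) (hN k j)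

theorem mul_mem_matrix_right {I : Ideal R} {M : Matrix ι ι R} (hM : M ∈ I.matrix ι)
    (N : Matrix ι ι R) : M * N ∈ I.matrix ι := by
  simpa only [mul_top] using
    mul_mem_matrix_mul (J := ⊤) hM (fun _ _ => Submodule.mem_top) (N := N)

theorem exists_mem_matrix_of_mem_matrix_sSup {c : Set (Ideal R)} (hc : c.Nonempty)
    (hdir : DirectedOn (· ≤ ·) c) {M : Matrix ι ι R} (hM : M ∈ (sSup c).matrix ι) :
    ∃ I ∈ c, M ∈ I.matrix ι := by
  have hspan : ∀ I : Ideal R, span (Set.range M.uncurry) ≤ I ↔ M ∈ I.matrix ι := by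
    simp [span_le, Set.range_subset_iff, Function.uncurry]
  have hcompact : IsCompactElement (span (Set.range M.uncurry)) :=
    (Submodule.fg_iff_compact _).mp (Submodule.fg_span (Set.finite_range _))
  simp only [← hspan] at hM ⊢
  exact (CompleteLattice.isCompactElement_iff_le_of_directed_sSup_le _ _).mp hcompact c hc hdir hM

end Ideal

namespace Matrix.GeneralLinearGroup

variable {R ι : Type*} [CommRing R] [Fintype ι] [DecidableEq ι]

theorem map_injective {S : Type*} [CommRing S] {f : R →+* S}
    (hf : Function.Injective f) : Function.Injective (map (n := ι) f) :=
  Units.map_injective fun _ _ h => Matrix.map_injective hf h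

end Matrix.GeneralLinearGroup

namespace MonoidHom

variable {Γ R ι : Type*} [Group Γ] [CommRing R] [Fintype ι] [DecidableEq ι]

def congruenceKernel (ρ : Γ →* GL ι R) (I : Ideal R) : Subgroup Γ :=
  ((GeneralLinearGroup.map (Ideal.Quotient.mk I)).comp ρ).ker

variable (ρ : Γ →* GL ι R)

theorem mem_congruenceKernel {I : Ideal R} {g : Γ} :
    g ∈ ρ.congruenceKernel I ↔ (ρ g : Matrix ι ι R) - 1 ∈ I.matrix ι := by
  rw [congruenceKernel, mem_ker, comp_apply,
    ← map_one (GeneralLinearGroup.map (Ideal.Quotient.mk I)), Units.ext_iff, ← Matrix.ext_iff]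
  simp only [GeneralLinearGroup.map_apply, Units.val_one, Ideal.Quotient.eq, Ideal.mem_matrix,
    Matrix.sub_apply]

theorem congruenceKernel_mono : Monotone ρ.congruenceKernel := fun _ _ hIJ _ hg =>
  (ρ.mem_congruenceKernel).mpr (Ideal.matrix_monotone ι hIJ ((ρ.mem_congruenceKernel).mp hg))

theorem congruenceKernel_bot : ρ.congruenceKernel ⊥ = ρ.ker := by
  ext g
  rw [mem_congruenceKernel, Ideal.matrix_bot, Ideal.mem_bot, sub_eq_zero, mem_ker,
    Units.ext_iff, Units.val_one]

theorem congruenceKernel_top : ρ.congruenceKernel ⊤ = ⊤ := by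
  ext g
  simp [mem_congruenceKernel]

theorem commutatorElement_mem_congruenceKernel_mul {I J : Ideal R} {x y : Γ}
    (hx : x ∈ ρ.congruenceKernel I) (hy : y ∈ ρ.congruenceKernel J) :
    ⁅x, y⁆ ∈ ρ.congruenceKernel (I * J) := by
  rw [mem_congruenceKernel] at hx hy ⊢
  set A : Matrix ι ι R := ρ x - 1
  set B : Matrix ι ι R := ρ y - 1
  have hcomm :
      (ρ ⁅x, y⁆ : Matrix ι ι R) - 1 = (A * B - B * A) * (ρ (y * x)⁻¹ : Matrix ι ι R) := by
    have hAB : A * B - B * A = (ρ (x * y) : Matrix ι ι R) - ρ (y * x) := by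
      simp only [A, B, map_mul, Units.val_mul]
      noncomm_ring
    rw [hAB, Matrix.sub_mul, ← Units.val_mul, ← Units.val_mul, ← map_mul, ← map_mul,
      mul_inv_cancel, map_one, Units.val_one, commutatorElement_def, _root_.mul_inv_rev,
      ← mul_assoc]
  rw [hcomm]
  refine Ideal.mul_mem_matrix_right (Submodule.sub_mem _ (Ideal.mul_mem_matrix_mul hx hy) ?_) _
  rw [mul_comm I]
  exact Ideal.mul_mem_matrix_mul hy hx

theorem congruenceKernel_eq_bot_or_of_mul_eq_bot
    (hcent : ∀ N : Subgroup Γ, N.Normal → N ≠ ⊥ → Subgroup.centralizer (N : Set Γ) = ⊥)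
    {I J : Ideal R} (h : ρ.congruenceKernel (I * J) = ⊥) :
    ρ.congruenceKernel I = ⊥ ∨ ρ.congruenceKernel J = ⊥ := by
  refine or_iff_not_imp_left.mpr fun hI => eq_bot_iff.mpr ?_
  rw [← hcent _ (normal_ker _) hI]
  intro y hy x hx
  rw [← commutatorElement_eq_one_iff_mul_comm, ← Subgroup.mem_bot, ← h]
  exact ρ.commutatorElement_mem_congruenceKernel_mul hx hy

theorem isPrime_of_maximal_congruenceKernel_eq_bot [Nontrivial Γ]
    (hcent : ∀ N : Subgroup Γ, N.Normal → N ≠ ⊥ → Subgroup.centralizer (N : Set Γ) = ⊥)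
    {I : Ideal R} (hI : Maximal (ρ.congruenceKernel · = ⊥) I) : I.IsPrime := by
  refine Ideal.isPrime_iff.mpr ⟨fun hI_top => ?_, fun {a b} hab => ?_⟩
  · exact bot_ne_top (hI.prop.symm.trans (hI_top ▸ ρ.congruenceKernel_top))
  · have hle : (I ⊔ Ideal.span {a}) * (I ⊔ Ideal.span {b}) ≤ I := by
      rw [Ideal.sup_mul, Ideal.mul_sup, Ideal.mul_sup, Ideal.span_singleton_mul_span_singleton]
      exact sup_le (sup_le Ideal.mul_le_right Ideal.mul_le_left)
        (sup_le Ideal.mul_le_right ((Ideal.span_singleton_le_iff_mem _).mpr hab))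
    have hbot := eq_bot_iff.mpr ((ρ.congruenceKernel_mono hle).trans hI.prop.le)
    exact (ρ.congruenceKernel_eq_bot_or_of_mul_eq_bot hcent hbot).imp
      (fun h => hI.le_of_ge h le_sup_left (Ideal.mem_sup_right (Ideal.mem_span_singleton_self a)))
      (fun h => hI.le_of_ge h le_sup_left (Ideal.mem_sup_right (Ideal.mem_span_singleton_self b)))

theorem exists_maximal_congruenceKernel_eq_bot (hρ : Function.Injective ρ) :
    ∃ I, Maximal (ρ.congruenceKernel · = ⊥) I := by
  have hchain : ∀ c ⊆ {I | ρ.congruenceKernel I = ⊥}, IsChain (· ≤ ·) c → c.Nonempty →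
      ρ.congruenceKernel (sSup c) = ⊥ := by
    refine fun c hc hchain hne => (Subgroup.eq_bot_iff_forall _).mpr fun g hg => ?_
    obtain ⟨I, hIc, hgI⟩ := Ideal.exists_mem_matrix_of_mem_matrix_sSup hne
      hchain.directedOn ((ρ.mem_congruenceKernel).mp hg)
    exact (Subgroup.eq_bot_iff_forall _).mp (hc hIc) g ((ρ.mem_congruenceKernel).mpr hgI)
  obtain ⟨I, -, hI⟩ := zorn_le_nonempty₀ {I | ρ.congruenceKernel I = ⊥}
    (fun c hc hc' J hJ => ⟨sSup c, hchain c hc hc' ⟨J, hJ⟩, fun _ => le_sSup⟩) ⊥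
    ((ρ.congruenceKernel_bot).trans ((ker_eq_bot_iff ρ).mpr hρ))
  exact ⟨I, hI⟩

theorem exists_injective_field_of_congruenceKernel_eq_bot {R : Type} [CommRing R]
    (ρ : Γ →* GL ι R) {I : Ideal R} [I.IsPrime] (hI : ρ.congruenceKernel I = ⊥) :
    ∃ (K : Type) (_ : Field K) (ψ : Γ →* GL ι K), Function.Injective ψ :=
  ⟨FractionRing (R ⧸ I), inferInstance,
    (GeneralLinearGroup.map (algebraMap (R ⧸ I) (FractionRing (R ⧸ I)))).comp
      ((GeneralLinearGroup.map (Ideal.Quotient.mk I)).comp ρ),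
    (GeneralLinearGroup.map_injective (IsFractionRing.injective _ _)).comp
      ((ker_eq_bot_iff _).mp hI)⟩

end MonoidHom

/-- Let `Γ` be a group in which the centralizer of any nontrivial normal
subgroup is trivial.  If `Γ` embeds into `GL(n, R)` for some commutative ring
`R`, then `Γ` embeds into `GL(n, K)` for some field `K`. -/
theorem stmt_8 {Γ : Type*} [Group Γ] (n : ℕ)
    (hcent : ∀ N : Subgroup Γ, N.Normal → N ≠ ⊥ →
      Subgroup.centralizer (N : Set Γ) = ⊥)
    (hlin : ∃ (R : Type) (_ : CommRing R) (φ : Γ →* GL (Fin n) R),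
      Function.Injective φ) :
    ∃ (K : Type) (_ : Field K) (ψ : Γ →* GL (Fin n) K),
      Function.Injective ψ := by
  obtain ⟨R, _, φ, hφ⟩ := hlin
  cases subsingleton_or_nontrivial Γ
  · exact ⟨ℚ, inferInstance, 1, fun a b _ => Subsingleton.elim a b⟩
  obtain ⟨I, hI⟩ := φ.exists_maximal_congruenceKernel_eq_bot hφ
  have := φ.isPrime_of_maximal_congruenceKernel_eq_bot hcent hI
  exact φ.exists_injective_field_of_congruenceKernel_eq_bot hI.prop
end

section
/- Let K be an infinite field of characteristic p, let L be a field, let χ : K* → L* be a group homomorphism, let μ : K → L be a nonzero additive map, and let n be a positive integer prime to p. Assume μ(x^n y) = χ(x) μ(y) for all x ∈ K*, y ∈ K. Then there exists a field embedding ν : K → L such that χ(x) = ν(x)^n for all x ∈ K*. -/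
open Polynomial Finset

private theorem aux_ringhom {K L : Type*} [Field K] [Infinite K] [Field L]
    (n : ℕ) (hn : 0 < n) (hnK : (n : K) ≠ 0)
    (f : K → L) (hadd : ∀ a b, f (a + b) = f a + f b) (h1 : f 1 = 1)
    (hkey : ∀ x y : K, f (x ^ n * y) = f (x ^ n) * f y) :
    ∃ ν : K →+* L, ∀ t, ν t = f t := by
  classical
  have f0 : f 0 = 0 := by
    have h0 := hadd 0 0
    rw [add_zero] at h0
    exact (left_eq_add.mp h0)
  have fneg : ∀ a : K, f (-a) = - f a := by
    intro a
    have h0 := hadd a (-a)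
    rw [add_neg_cancel, f0] at h0
    exact eq_neg_of_add_eq_zero_right h0.symm
  set S : Subfield K :=
    { carrier := {c | ∀ y, f (c * y) = f c * f y}
      one_mem' := by intro y; rw [one_mul, h1, one_mul]
      mul_mem' := by
        intro a b ha hb y
        have e1 : f (a * b * y) = f a * (f b * f y) := by
          rw [mul_assoc, ha (b * y), hb y]
        have e2 : f (a * b) = f a * f b := ha b
        rw [e1, e2, mul_assoc]
      zero_mem' := by intro y; rw [zero_mul, f0, zero_mul]
      add_mem' := by
        intro a b ha hb y
        rw [add_mul, hadd, ha y, hb y, hadd, add_mul]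
      neg_mem' := by
        intro a ha y
        rw [neg_mul, fneg, ha y, fneg, neg_mul]
      inv_mem' := by
        intro a ha
        rcases eq_or_ne a 0 with rfl | h0'
        · intro y; rw [inv_zero, zero_mul, f0, zero_mul]
        · have hfa : f a * f a⁻¹ = 1 := by
            have h2 := ha a⁻¹
            rw [mul_inv_cancel₀ h0', h1] at h2
            exact h2.symm
          have hfa0 : f a ≠ 0 := left_ne_zero_of_mul_eq_one hfa
          intro y
          apply mul_left_cancel₀ hfa0
          calc f a * f (a⁻¹ * y) = f (a * (a⁻¹ * y)) := (ha _).symm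
            _ = f y := by rw [← mul_assoc, mul_inv_cancel₀ h0', one_mul]
            _ = f a * (f a⁻¹ * f y) := by rw [← mul_assoc, hfa, one_mul] } with hS
  have hmem : ∀ c : K, c ∈ S ↔ ∀ y, f (c * y) = f c * f y := fun c => Iff.rfl
  have hpow : ∀ x : K, x ^ n ∈ S := fun x => (hmem _).mpr (hkey x)
  have hSinf : (S : Set K).Infinite := by
    intro hfin
    have huniv : (Set.univ : Set K).Finite := by
      have hsub : (Set.univ : Set K) ⊆ ⋃ a ∈ (S : Set K), {x : K | x ^ n = a} :=
        fun x _ => Set.mem_biUnion (hpow x) rfl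
      refine Set.Finite.subset (Set.Finite.biUnion hfin fun a _ => ?_) hsub
      refine Set.Finite.subset
        (Polynomial.finite_setOf_isRoot (X_pow_sub_C_ne_zero hn a)) ?_
      intro x hx
      simp only [Set.mem_setOf_eq] at hx ⊢
      simp [Polynomial.IsRoot, hx]
    exact Set.infinite_univ huniv
  have hSall : ∀ x : K, x ∈ S := by
    intro x
    obtain ⟨t, hts, htc⟩ := hSinf.exists_subset_card_eq (n + 1)
    have hinj : Set.InjOn (id : K → K) t := Function.injective_id.injOn
    set p : K[X] := (X + C x) ^ n with hp
    have hdeg : p.degree < (t.card : WithBot ℕ) := by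
      rw [htc]
      have h1d : p.degree ≤ (n : WithBot ℕ) := by
        calc p.degree ≤ n • (X + C x).degree := Polynomial.degree_pow_le _ _
          _ = n • (1 : WithBot ℕ) := by rw [Polynomial.degree_X_add_C]
          _ = (n : WithBot ℕ) := by simp
      exact lt_of_le_of_lt h1d (by exact_mod_cast Nat.lt_succ_self n)
    have hrepr : p = Lagrange.interpolate t id (fun c => p.eval c) :=
      Lagrange.eq_interpolate hinj hdeg
    have hlift : Lagrange.interpolate t id (fun c => p.eval c)
        ∈ Polynomial.lifts (S.subtype) := by
      rw [Lagrange.interpolate_apply]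
      refine sum_mem fun i hi => ?_
      refine mul_mem ?_ ?_
      · refine Polynomial.C'_mem_lifts ?_
        have hv : p.eval i ∈ S := by
          have he : p.eval i = (i + x) ^ n := by simp [hp]
          rw [he]; exact hpow (i + x)
        exact ⟨⟨_, hv⟩, rfl⟩
      · unfold Lagrange.basis
        refine prod_mem fun j hj => ?_
        have hi' : (i : K) ∈ S := hts hi
        have hj' : (j : K) ∈ S := hts (Finset.mem_of_mem_erase hj)
        refine (Polynomial.mem_lifts _).mpr
          ⟨C (⟨_, S.inv_mem (S.sub_mem hi' hj')⟩ : S) * (X - C (⟨j, hj'⟩ : S)), ?_⟩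
        simp [Lagrange.basisDivisor]
    have hcoeff : p.coeff (n - 1) ∈ S := by
      have := (Polynomial.lifts_iff_coeff_lifts _).mp hlift (n - 1)
      rw [← hrepr] at this
      obtain ⟨⟨a, ha⟩, heq⟩ := this
      rw [← heq]; exact ha
    have hc : p.coeff (n - 1) = x * n := by
      rw [hp, Polynomial.coeff_X_add_C_pow]
      have e1 : n - (n - 1) = 1 := by omega
      rw [e1, pow_one, Nat.choose_symm hn, Nat.choose_one_right]
    have hxn : x * (n : K) ∈ S := by rw [← hc]; exact hcoeff
    have hx : x = (x * n) * (n : K)⁻¹ := by field_simp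
    rw [hx]
    exact S.mul_mem hxn (S.inv_mem (natCast_mem S n))
  exact ⟨{ toFun := f, map_one' := h1,
           map_mul' := fun a b => ((hmem a).mp (hSall a)) b,
           map_zero' := f0, map_add' := hadd }, fun t => rfl⟩

/-- Let `K` be an infinite field of characteristic `p`, `L` a field,
`χ : K* → L*` a character, `μ : K → L` a nonzero additive map and `n` a
positive integer prime to `p`.  If `μ(x^n y) = χ(x) μ(y)` for all `x ∈ K*`,
`y ∈ K`, then `χ` is semi-algebraic of degree `n`: there is a field embedding
`ν : K → L` with `χ(x) = ν(x)^n` for all `x ∈ K*`. -/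
theorem stmt_10 {K L : Type*} [Field K] [Infinite K] [Field L]
    (χ : Kˣ →* Lˣ) (μ : K →+ L) (hμ : μ ≠ 0) (n : ℕ) (hn : 0 < n)
    (hpn : ¬ (ringChar K ∣ n))
    (h : ∀ (x : Kˣ) (y : K), μ ((x : K) ^ n * y) = (χ x : L) * μ y) :
    ∃ ν : K →+* L, ∀ x : Kˣ, (χ x : L) = ν (x : K) ^ n := by
  obtain ⟨y₀, hy₀⟩ : ∃ y, μ y ≠ 0 := by
    by_contra hc; push_neg at hc
    exact hμ (AddMonoidHom.ext fun y => by simp [hc y])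
  set f : K → L := fun t => μ (t * y₀) * (μ y₀)⁻¹ with hf
  have hadd : ∀ a b : K, f (a + b) = f a + f b := by
    intro a b
    simp only [hf, add_mul, map_add]
  have h1 : f 1 = 1 := by simp [hf, mul_inv_cancel₀ hy₀]
  have hfpow : ∀ x : Kˣ, f ((x : K) ^ n) = χ x := by
    intro x
    simp only [hf]
    rw [h x y₀, mul_assoc, mul_inv_cancel₀ hy₀, mul_one]
  have hkey : ∀ x y : K, f (x ^ n * y) = f (x ^ n) * f y := by
    intro x y
    rcases eq_or_ne x 0 with rfl | hx
    · have f0 : f 0 = 0 := by simp [hf]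
      rw [zero_pow hn.ne', zero_mul, f0, zero_mul]
    · have hh := h (Units.mk0 x hx) (y * y₀)
      rw [Units.val_mk0] at hh
      have hh0 := h (Units.mk0 x hx) y₀
      rw [Units.val_mk0] at hh0
      simp only [hf]
      rw [mul_assoc, hh, hh0]
      field_simp
  have hnK : (n : K) ≠ 0 := fun hc =>
    hpn ((CharP.cast_eq_zero_iff K (ringChar K) n).mp hc)
  obtain ⟨ν, hν⟩ := aux_ringhom n hn hnK f hadd h1 hkey
  refine ⟨ν, fun x => ?_⟩
  rw [← hfpow x, ← map_pow, hν]
end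

section
/- Let K be an infinite field of characteristic p, let L be another field, and let n ≠ m be positive integers prime to p. Then there is no character χ : K* → L* which is simultaneously of the form χ(x) = ν(x)^n for a field embedding ν : K → L and of the form χ(x) = ν'(x)^m for a field embedding ν' : K → L. -/
/-- In an infinite field, for `0 < d` some unit satisfies `x ^ d ≠ 1`. -/
lemma aux_exists_not_root {K : Type*} [Field K] [Infinite K] {d : ℕ} (hd : 0 < d) :
    ∃ x : Kˣ, (x : K) ^ d ≠ 1 := by
  by_contra h
  push_neg at h
  have hfin : Set.Finite {x : K | Polynomial.IsRoot (Polynomial.X ^ d - Polynomial.C (1:K)) x} :=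
    Polynomial.finite_setOf_isRoot (Polynomial.X_pow_sub_C_ne_zero hd 1)
  have hsub : {x : K | x ≠ 0} ⊆ {x : K | Polynomial.IsRoot (Polynomial.X ^ d - Polynomial.C (1:K)) x} := by
    intro x hx
    have := h (Units.mk0 x hx)
    simp only [Units.val_mk0] at this
    simp [Polynomial.IsRoot, this]
  have hinf : Set.Infinite {x : K | x ≠ 0} := by
    have := Set.Finite.infinite_compl (Set.finite_singleton (0 : K))
    simpa [Set.compl_singleton_eq] using this
  exact (hinf.mono hsub) hfin

/-- Powers of an embedding are distinct on units of an infinite field. -/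
lemma aux_pow_inj {K L : Type*} [Field K] [Infinite K] [Field L]
    (μ : K →+* L) {a b : ℕ} (hab : a ≤ b)
    (h : ∀ x : Kˣ, (μ (x : K)) ^ a = (μ (x : K)) ^ b) : a = b := by
  by_contra hne
  have hd : 0 < b - a := Nat.sub_pos_of_lt (lt_of_le_of_ne hab hne)
  obtain ⟨x, hx⟩ := aux_exists_not_root (K := K) hd
  have hx0 : μ (x : K) ≠ 0 := by
    exact (map_ne_zero μ).mpr (Units.ne_zero x)
  have hb : (μ (x : K)) ^ a * (μ (x : K)) ^ (b - a) = (μ (x : K)) ^ a * 1 := by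
    rw [mul_one, ← pow_add, Nat.add_sub_cancel' hab, ← h x]
  have h1 : (μ (x : K)) ^ (b - a) = 1 := by
    exact mul_left_cancel₀ (pow_ne_zero a hx0) hb
  have : μ ((x : K) ^ (b - a)) = μ 1 := by simpa using h1
  exact hx (μ.injective this)

/-- Let `K` be an infinite field of characteristic `p`, `L` a field, and
`n ≠ m` positive integers prime to `p`.  No character `χ : K* → L*` is
simultaneously semi-algebraic of degree `n` and of degree `m`. -/
theorem stmt_11 {K L : Type*} [Field K] [Infinite K] [Field L]
    (n m : ℕ) (hn : 0 < n) (hm : 0 < m) (hnm : n ≠ m)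
    (hpn : ¬ (ringChar K ∣ n)) (hpm : ¬ (ringChar K ∣ m)) :
    ¬ ∃ (χ : Kˣ →* Lˣ) (ν ν' : K →+* L),
        (∀ x : Kˣ, (χ x : L) = ν (x : K) ^ n) ∧
        (∀ x : Kˣ, (χ x : L) = ν' (x : K) ^ m) := by
  rintro ⟨χ, ν, ν', h1, h2⟩
  classical
  set f : Kˣ →* L := ν.toMonoidHom.comp (Units.coeHom K) with hf
  set g : Kˣ →* L := ν'.toMonoidHom.comp (Units.coeHom K) with hg
  have hfx : ∀ x : Kˣ, f x = ν (x : K) := fun _ => rfl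
  have hgx : ∀ x : Kˣ, g x = ν' (x : K) := fun _ => rfl
  -- distinctness of powers of f, and of g
  have hinjf : ∀ a b : ℕ, f ^ a = f ^ b → a = b := by
    intro a b hab
    have hpt : ∀ x : Kˣ, (ν (x : K)) ^ a = (ν (x : K)) ^ b := by
      intro x
      have := DFunLike.congr_fun hab x
      simpa [MonoidHom.pow_apply, hfx] using this
    rcases le_total a b with h | h
    · exact aux_pow_inj ν h hpt
    · exact (aux_pow_inj ν h (fun x => (hpt x).symm)).symm
  have hinjg : ∀ a b : ℕ, g ^ a = g ^ b → a = b := by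
    intro a b hab
    have hpt : ∀ x : Kˣ, (ν' (x : K)) ^ a = (ν' (x : K)) ^ b := by
      intro x
      have := DFunLike.congr_fun hab x
      simpa [MonoidHom.pow_apply, hgx] using this
    rcases le_total a b with h | h
    · exact aux_pow_inj ν' h hpt
    · exact (aux_pow_inj ν' h (fun x => (hpt x).symm)).symm
  -- nonvanishing of n and m in L
  have hnL : (n : L) ≠ 0 := by
    intro h
    have : ν ((n : K)) = 0 := by simpa using h
    have : (n : K) = 0 := by
      have := map_eq_zero (f := ν) |>.mp this
      exact this
    exact hpn ((CharP.cast_eq_zero_iff K (ringChar K) n).mp this)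
  have hmL : (m : L) ≠ 0 := by
    intro h
    have : ν' ((m : K)) = 0 := by simpa using h
    have : (m : K) = 0 := by
      have := map_eq_zero (f := ν') |>.mp this
      exact this
    exact hpm ((CharP.cast_eq_zero_iff K (ringChar K) m).mp this)
  -- the key relation: ν(y)^n = ν'(y)^m for all y : K
  have hrel : ∀ y : K, ν y ^ n = ν' y ^ m := by
    intro y
    rcases eq_or_ne y 0 with rfl | hy
    · simp [zero_pow hn.ne', zero_pow hm.ne']
    · have := (h1 (Units.mk0 y hy)).symm.trans (h2 (Units.mk0 y hy))
      simpa using this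
  -- the linear dependence among characters
  set l : (Kˣ →* L) →₀ L :=
    (∑ k ∈ Finset.range (n + 1), Finsupp.single (f ^ k) ((n.choose k : L)))
      - (∑ j ∈ Finset.range (m + 1), Finsupp.single (g ^ j) ((m.choose j : L))) with hl
  have hl0 : l = 0 := by
    apply linearIndependent_iff.mp (linearIndependent_monoidHom Kˣ L)
    rw [hl, map_sub, map_sum, map_sum]
    simp only [Finsupp.linearCombination_single]
    rw [sub_eq_zero]
    funext x
    simp only [Finset.sum_apply, Pi.smul_apply, smul_eq_mul, MonoidHom.pow_apply, hfx, hgx]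
    have hbn : ∑ k ∈ Finset.range (n + 1), (n.choose k : L) * ν (x : K) ^ k
        = (ν ((x : K) + 1)) ^ n := by
      rw [map_add, map_one, add_pow]
      exact Finset.sum_congr rfl (fun k _ => by ring)
    have hbm : ∑ j ∈ Finset.range (m + 1), (m.choose j : L) * ν' (x : K) ^ j
        = (ν' ((x : K) + 1)) ^ m := by
      rw [map_add, map_one, add_pow]
      exact Finset.sum_congr rfl (fun j _ => by ring)
    rw [hbn, hbm, hrel]
  -- evaluate the coefficient finsupp at f and at g
  have heval : ∀ c : Kˣ →* L,
      (∑ k ∈ Finset.range (n + 1), (if f ^ k = c then (n.choose k : L) else 0))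
        = ∑ j ∈ Finset.range (m + 1), (if g ^ j = c then (m.choose j : L) else 0) := by
    intro c
    have := DFunLike.congr_fun hl0 c
    rw [hl] at this
    simpa [Finsupp.sub_apply, Finsupp.finset_sum_apply, Finsupp.single_apply,
      sub_eq_zero] using this
  -- at f : left sum is n, so some power of g equals f
  have hevf := heval f
  have hleft : (∑ k ∈ Finset.range (n + 1), (if f ^ k = f then (n.choose k : L) else 0))
      = (n : L) := by
    rw [Finset.sum_eq_single_of_mem 1 (Finset.mem_range.mpr (by omega))]
    · simp
    · intro k _ hk1
      rw [if_neg]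
      intro h
      exact hk1 (hinjf k 1 (by simpa using h))
  have hexj : ∃ j ∈ Finset.range (m + 1), g ^ j = f := by
    by_contra hne
    push_neg at hne
    rw [hleft, Finset.sum_eq_zero (fun j hj => if_neg (hne j hj))] at hevf
    exact hnL hevf
  -- at g : right sum is m, so some power of f equals g
  have hevg := heval g
  have hright : (∑ j ∈ Finset.range (m + 1), (if g ^ j = g then (m.choose j : L) else 0))
      = (m : L) := by
    rw [Finset.sum_eq_single_of_mem 1 (Finset.mem_range.mpr (by omega))]
    · simp
    · intro j _ hj1
      rw [if_neg]
      intro h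
      exact hj1 (hinjg j 1 (by simpa using h))
  have hexk : ∃ k ∈ Finset.range (n + 1), f ^ k = g := by
    by_contra hne
    push_neg at hne
    rw [hright, Finset.sum_eq_zero (fun k hk => if_neg (hne k hk))] at hevg
    exact hmL hevg.symm
  obtain ⟨j₁, _, hj₁⟩ := hexj
  obtain ⟨k₁, _, hk₁⟩ := hexk
  -- f = g
  have hfg : f = g := by
    have : f ^ (k₁ * j₁) = f ^ 1 := by
      rw [pow_mul, hk₁, hj₁, pow_one]
    have hkj : k₁ * j₁ = 1 := hinjf _ _ this
    have hj1 : j₁ = 1 := Nat.eq_one_of_mul_eq_one_left hkj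
    rw [← hj₁, hj1, pow_one]
  -- conclude n = m
  have : ∀ x : Kˣ, (ν (x : K)) ^ n = (ν (x : K)) ^ m := by
    intro x
    have := hrel (x : K)
    rw [← hfx x, ← hgx x, ← hfg] at this
    simpa [hfx] using this
  rcases le_total n m with h | h
  · exact hnm (aux_pow_inj ν h this)
  · exact hnm ((aux_pow_inj ν h (fun x => (this x).symm)).symm)
end

section
/- Let (E_p)_{p∈P} be a family of nontrivial groups with |P| ≥ 2, not both of order 2 when |P| = 2, and suppose the free product Γ = *_{p∈P} E_p acts on a set Ω. Assume there are nonempty pairwise disjoint subsets Ω_p ⊂ Ω such that g·Ω_q ⊂ Ω_p whenever p ≠ q and g ∈ E_p \ {1}. Then the action of Γ on Ω is faithful. -/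
lemma aux_card_two {X : Type*} [Nontrivial X] (h : ¬ 3 ≤ Cardinal.mk X) : Nat.card X = 2 := by
  rw [not_le] at h
  have hfin : Finite X := Cardinal.lt_aleph0_iff_finite.mp (h.trans (Cardinal.nat_lt_aleph0 3))
  have h2 : 2 ≤ Nat.card X := Finite.one_lt_card
  have hc : (Nat.card X : Cardinal) = Cardinal.mk X :=
    Cardinal.cast_toNat_of_lt_aleph0 (h.trans (Cardinal.nat_lt_aleph0 3))
  have h3 : Nat.card X < 3 := by exact_mod_cast hc ▸ h
  omega

/-- Ping-pong lemma: let `(E p)_{p ∈ P}` be a family of nontrivial groups with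
`|P| ≥ 2`, whose free product is nondihedral (not `ℤ/2 * ℤ/2`), acting on a
set `Ω` via `act`.  If there are nonempty pairwise disjoint subsets
`Ωs p ⊆ Ω` with `g • Ωs q ⊆ Ωs p` whenever `p ≠ q` and `1 ≠ g ∈ E p`, then
the action is faithful. -/
theorem stmt_12 {P : Type*} [Nontrivial P] {E : P → Type*}
    [∀ p, Group (E p)] [∀ p, Nontrivial (E p)]
    (hnondihedral : ¬ ∃ p q : P, p ≠ q ∧ (∀ r : P, r = p ∨ r = q) ∧
      Nat.card (E p) = 2 ∧ Nat.card (E q) = 2)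
    {Ω : Type*} (act : Monoid.CoprodI E →* Equiv.Perm Ω)
    (Ωs : P → Set Ω) (hne : ∀ p, (Ωs p).Nonempty)
    (hdisj : Pairwise fun p q => Disjoint (Ωs p) (Ωs q))
    (hpp : ∀ p q : P, p ≠ q → ∀ g : E p, g ≠ 1 → ∀ x ∈ Ωs q,
      act (Monoid.CoprodI.of g) x ∈ Ωs p) :
    Function.Injective act := by
  classical
  have hcard : 3 ≤ Cardinal.mk P ∨ ∃ p, 3 ≤ Cardinal.mk (E p) := by
    by_contra h
    push_neg at h
    obtain ⟨h1, h2⟩ := h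
    apply hnondihedral
    have hP2 : Nat.card P = 2 := aux_card_two (not_le.mpr h1)
    obtain ⟨p, q, hpq, huniv⟩ := Nat.card_eq_two_iff.mp hP2
    refine ⟨p, q, hpq, ?_, aux_card_two (not_le.mpr (h2 p)), aux_card_two (not_le.mpr (h2 q))⟩
    intro r
    have : r ∈ ({p, q} : Set P) := huniv ▸ Set.mem_univ r
    simpa using this
  have hact : act = Monoid.CoprodI.lift (fun p => act.comp Monoid.CoprodI.of) := by
    symm
    apply Monoid.CoprodI.ext_hom
    intro p
    ext g
    simp
  rw [hact]
  apply Monoid.CoprodI.lift_injective_of_ping_pong _ hcard Ωs hne hdisj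
  intro p q hpq g hg x hx
  obtain ⟨y, hy, rfl⟩ := hx
  exact hpp p q hpq g hg y hy
end

section
/- Let G₁, G₂ be groups with a common subgroup A, and let G₁' ⊆ G₁, G₂' ⊆ G₂, A' ⊆ A be subgroups with G₁' ∩ A = G₂' ∩ A = A'. Then the natural map G₁' *_{A'} G₂' → G₁ *_A G₂ is injective. -/
open Monoid

/-- Let `G₁, G₂` be groups with a common subgroup `A` (injections
`φ i : A →* G i`, `i : Bool`), and let `H i ⊆ G i`, `A' ⊆ A` be subgroups
with `H i ∩ A = A'` (i.e. `comap (φ i) (H i) = A'`).  Then the natural map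
`G₁' *_{A'} G₂' → G₁ *_A G₂` (any homomorphism `ψ` compatible with the
canonical maps `of` and `base`) is injective. -/
theorem stmt_14 {A : Type*} [Group A] {G : Bool → Type*} [∀ i, Group (G i)]
    (φ : ∀ i, A →* G i) (hφ : ∀ i, Function.Injective (φ i))
    (A' : Subgroup A) (H : ∀ i, Subgroup (G i))
    (hHA : ∀ i, Subgroup.comap (φ i) (H i) = A')
    (φ' : ∀ i, A' →* H i)
    (hφ' : ∀ i (a : A'), ((φ' i a : G i)) = φ i (a : A))
    (ψ : PushoutI φ' →* PushoutI φ)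
    (hψ : ∀ i (h : H i), ψ (PushoutI.of i h) = PushoutI.of i (h : G i))
    (hψb : ∀ a : A', ψ (PushoutI.base φ' a) = PushoutI.base φ (a : A)) :
    Function.Injective ψ := by
  classical
  have hφ'inj : ∀ i, Function.Injective (φ' i) := by
    intro i a b hab
    refine Subtype.ext (hφ i ?_)
    rw [← hφ' i a, ← hφ' i b, hab]
  rw [injective_iff_map_eq_one]
  intro g hg
  obtain ⟨d⟩ := PushoutI.NormalWord.transversal_nonempty φ' hφ'inj
  set w : PushoutI.NormalWord d := g • PushoutI.NormalWord.empty with hwdef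
  have hprod : w.prod = g := by
    rw [hwdef, PushoutI.NormalWord.prod_smul, PushoutI.NormalWord.prod_empty, mul_one]
  -- the mapped word in the big coproduct
  let f : (Σ i, (H i : Subgroup (G i))) → (Σ i, G i) := fun p => ⟨p.1, (p.2 : G p.1)⟩
  let W : CoprodI.Word G :=
    { toList := w.toList.map f
      ne_one := by
        intro l hl
        obtain ⟨p, hp, rfl⟩ := List.mem_map.1 hl
        have h1 := w.ne_one p hp
        intro h
        exact h1 (by ext; exact h)
      chain_ne := by
        have : (w.toList.map f).map Sigma.fst = w.toList.map Sigma.fst := by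
          simp [f, Function.comp]
        rw [← List.isChain_map (R := (· ≠ ·)) (f := Sigma.fst), this,
          List.isChain_map]
        exact w.chain_ne }
  -- key computation: ψ transforms word products into word products
  have hlist : ∀ l : List (Σ i, (H i : Subgroup (G i))),
      PushoutI.ofCoprodI (List.prod ((l.map f).map fun p => CoprodI.of p.snd)) =
        ψ (PushoutI.ofCoprodI (List.prod (l.map fun p => CoprodI.of p.snd))) := by
    intro l
    induction l with
    | nil => simp
    | cons p l ih =>
      simp only [List.map_cons, List.prod_cons, map_mul, ih, PushoutI.ofCoprodI_of]
      rw [hψ]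
  have hWprod : PushoutI.ofCoprodI W.prod = ψ (PushoutI.ofCoprodI w.toWord.prod) := hlist _
  -- W is reduced
  have hred : PushoutI.Reduced φ W := by
    intro p hp'
    obtain ⟨⟨i', h⟩, hp, rfl⟩ := List.mem_map.1 hp'
    rintro ⟨a, ha⟩
    have ha' : φ i' a = (h : G i') := ha
    have haA' : a ∈ A' := by
      rw [← hHA i']
      show φ i' a ∈ H i'
      rw [ha']; exact h.2
    have hh1 : h = (1 : H i') := by
      have hrange : h ∈ Set.range (φ' i') := by
        refine ⟨⟨a, haA'⟩, Subtype.ext ?_⟩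
        rw [hφ' i' ⟨a, haA'⟩]
        exact ha'
      -- h is in the range of φ' i' and in the transversal, hence h = 1
      obtain ⟨a', ha'⟩ := hrange
      have hmem : (h : H i') ∈ d.set i' := w.normalized i' h hp
      obtain ⟨q, _, hq⟩ := (d.compl i').existsUnique h
      have e1 := hq ⟨⟨φ' i' a', ⟨a', rfl⟩⟩, ⟨1, d.one_mem i'⟩⟩ (by simp [ha'])
      have e2 := hq ⟨⟨1, one_mem _⟩, ⟨h, hmem⟩⟩ (by simp)
      have e3 := e1.trans e2.symm
      have e4 := congrArg (fun x : ↑((φ' i').range : Set (H i')) × ↑(d.set i') =>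
        (x.2 : H i')) e3
      exact e4.symm
    exact w.ne_one ⟨i', h⟩ hp (by simp [hh1])
  -- ψ g = 1 gives the image word product lies in the base range
  have hmemrange : PushoutI.ofCoprodI W.prod ∈ (PushoutI.base φ).range := by
    have : ψ g = ψ (PushoutI.base φ' w.head * PushoutI.ofCoprodI w.toWord.prod) := by
      rw [← hprod]; rfl
    rw [hg, map_mul, hψb] at this
    refine ⟨((w.head : A))⁻¹, ?_⟩
    rw [map_inv]
    rw [hWprod]
    exact inv_eq_of_mul_eq_one_right this.symm
  have hWempty := PushoutI.Reduced.eq_empty_of_mem_range hφ hred hmemrange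
  have hWnil : W.toList = [] := by rw [hWempty]; rfl
  have hwnil : w.toList = [] := by
    have := hWnil
    simpa [W] using this
  have hgbase : g = PushoutI.base φ' w.head := by
    rw [← hprod]
    show PushoutI.base φ' w.head * PushoutI.ofCoprodI w.toWord.prod = _
    have : w.toWord.prod = 1 := by
      simp [CoprodI.Word.prod, hwnil]
    rw [this, map_one, mul_one]
  have : ψ g = PushoutI.base φ (w.head : A) := by rw [hgbase, hψb]
  rw [hg] at this
  have hb1 : (w.head : A) = 1 := by
    have := PushoutI.base_injective hφ (a₁ := (w.head : A)) (a₂ := 1)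
      (by rw [← this, map_one])
    exact this
  have : w.head = 1 := Subtype.ext hb1
  rw [hgbase, this, map_one]
end

section
/- Let G(t) ∈ GL(2, K[t]) with G(0) = identity, where K is a field. Then G can be written as a product of matrices of the form id + t·f(t)·e, where f ∈ K[t] and e is a 2×2 matrix over K with e² = 0 (rank-one square-zero). Equivalently, GL₁(2,K[t]) is generated by the subgroups E_δ = { id + t f(t) e_δ : f ∈ K[t] } as δ ranges over P¹_K. -/
/-!
Row-reduce the first column `(a, c)` of `G`, keeping `G(0) = 1`. Let `D` be the larger of the
degrees of `a` and `c` and `(μ, ν)` their coefficients of `X ^ D`. Left multiplication by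
`1 + X f e`, with `e` the square-zero matrix with image `K ∙ (μ, ν)`, adds `X f u • (μ, ν)` to the
column, where `u = μ c - ν a` has degree `< D`, and `u ≠ 0` because `c ≠ 0` and `u(0) = -ν`.
Choosing `f` so that `X f u + X ^ D` has degree `< D` lowers `D`. Once `c = 0`, `det G = 1` and
`G(0) = 1` force `a = d = 1`, so `G = 1 + b E₀₁` with `X ∣ b`.
-/

open Matrix Polynomial

theorem Polynomial.eq_one_of_isUnit_of_eval_zero {R : Type*} [CommRing R] [NoZeroDivisors R]
    {p : R[X]} (hp : IsUnit p) (h0 : p.eval 0 = 1) : p = 1 := by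
  rw [eq_C_of_natDegree_eq_zero (natDegree_eq_zero_of_isUnit hp), coeff_zero_eq_eval_zero, h0,
    C_1]

theorem Polynomial.natDegree_lt_of_degree_lt {R : Type*} [Semiring R] {p : R[X]} {D : ℕ}
    (hD : 0 < D) (h : p.degree < D) : p.natDegree < D := by
  rcases eq_or_ne p 0 with rfl | hp
  · simpa using hD
  · exact (natDegree_lt_iff_degree_lt hp).mpr h

theorem Polynomial.degree_add_C_coeff_mul_lt {R : Type*} [Ring R] {p w : R[X]} {D : ℕ}
    (hp : p.natDegree ≤ D) (hw : (X ^ D + w).degree < ↑D) :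
    (p + C (p.coeff D) * w).degree < ↑D := by
  rw [degree_lt_iff_coeff_zero] at hw ⊢
  intro m hm
  have hwm := hw m hm
  rw [coeff_add, coeff_X_pow] at hwm
  rcases hm.eq_or_lt with rfl | hlt
  · rw [if_pos rfl] at hwm
    rw [coeff_add, coeff_C_mul, eq_neg_of_add_eq_zero_right hwm, mul_neg_one, add_neg_cancel]
  · rw [if_neg hlt.ne', zero_add] at hwm
    rw [coeff_add, coeff_C_mul, hwm, mul_zero, add_zero,
      coeff_eq_zero_of_natDegree_lt (hp.trans_lt hlt)]

theorem Polynomial.exists_degree_X_pow_add_X_mul_mul_lt {K : Type*} [Field K] {u : K[X]}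
    (hu : u ≠ 0) {D : ℕ} (hD : u.natDegree < D) :
    ∃ f : K[X], (X ^ D + X * f * u).degree < ↑D := by
  obtain ⟨j, rfl⟩ := Nat.exists_eq_add_of_lt hD
  have hlc : u.leadingCoeff ≠ 0 := leadingCoeff_ne_zero.mpr hu
  set q := C u.leadingCoeff⁻¹ * X ^ (j + 1) * u
  have hq_deg : q.degree = (X ^ (u.natDegree + j + 1) : K[X]).degree := by
    rw [degree_mul, degree_C_mul (inv_ne_zero hlc), degree_X_pow, degree_X_pow,
      degree_eq_natDegree hu]
    norm_cast
    omega
  have hq_lc : q.leadingCoeff = (X ^ (u.natDegree + j + 1) : K[X]).leadingCoeff := by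
    rw [leadingCoeff_mul, leadingCoeff_mul, leadingCoeff_C, leadingCoeff_X_pow,
      leadingCoeff_X_pow, mul_one, inv_mul_cancel₀ hlc]
  refine ⟨-(C u.leadingCoeff⁻¹ * X ^ j), ?_⟩
  have hq : X ^ (u.natDegree + j + 1) + X * -(C u.leadingCoeff⁻¹ * X ^ j) * u =
      X ^ (u.natDegree + j + 1) - q := by
    ring
  rw [hq]
  simpa using degree_sub_lt_left hq_deg.symm (pow_ne_zero _ X_ne_zero) hq_lc.symm

theorem Polynomial.exists_reduce_column_degree {K : Type*} [Field K] {a c : K[X]}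
    (ha : a.eval 0 = 1) (hc0 : c.eval 0 = 0) (hc : c ≠ 0) :
    ∃ μ ν : K, (μ ≠ 0 ∨ ν ≠ 0) ∧ ∃ f : K[X],
      (a + C μ * (X * f * (C μ * c - C ν * a))).natDegree < max a.natDegree c.natDegree ∧
      (c + C ν * (X * f * (C μ * c - C ν * a))).natDegree < max a.natDegree c.natDegree := by
  set D := max a.natDegree c.natDegree
  set μ := a.coeff D
  set ν := c.coeff D
  have hμν : μ ≠ 0 ∨ ν ≠ 0 := by
    rcases le_total a.natDegree c.natDegree with h | h
    · exact Or.inr (by simpa [ν, D, max_eq_right h] using hc)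
    · have ha0 : a ≠ 0 := by rintro rfl; simp at ha
      exact Or.inl (by simpa [μ, D, max_eq_left h] using ha0)
  set u := C μ * c - C ν * a
  have hu0 : u ≠ 0 := by
    by_cases hν : ν = 0
    · simpa [u, hν, hc] using hμν
    · intro h
      simpa [u, ha, hc0, hν] using congrArg (eval 0) h
  have hu : u.degree < D := by
    rw [degree_lt_iff_coeff_zero]
    intro m hm
    rcases hm.eq_or_lt with rfl | hlt
    · simp only [u, coeff_sub, coeff_C_mul]
      ring
    · simp only [u, coeff_sub, coeff_C_mul,
        coeff_eq_zero_of_natDegree_lt ((le_max_left _ _).trans_lt hlt),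
        coeff_eq_zero_of_natDegree_lt ((le_max_right _ _).trans_lt hlt), mul_zero, sub_zero]
  have hD : 0 < D := by
    refine lt_max_of_lt_right (Nat.pos_of_ne_zero fun h => hc ?_)
    rw [eq_C_of_natDegree_eq_zero h, coeff_zero_eq_eval_zero, hc0, C_0]
  obtain ⟨f, hf⟩ :=
    exists_degree_X_pow_add_X_mul_mul_lt hu0 ((natDegree_lt_iff_degree_lt hu0).mpr hu)
  exact ⟨μ, ν, hμν, f,
    natDegree_lt_of_degree_lt hD (degree_add_C_coeff_mul_lt (le_max_left _ _) hf),
    natDegree_lt_of_degree_lt hD (degree_add_C_coeff_mul_lt (le_max_right _ _) hf)⟩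

section LineNilpotent

variable {R : Type*} [CommRing R]

/-- `v wᵀ` for `v = (μ, ν)`, `w = (-ν, μ)`: the square-zero matrix with image `R ∙ (μ, ν)`. -/
def lineNilpotent (μ ν : R) : Matrix (Fin 2) (Fin 2) R := !![-(μ * ν), μ ^ 2; -ν ^ 2, μ * ν]

theorem lineNilpotent_mul_self (μ ν : R) : lineNilpotent μ ν * lineNilpotent μ ν = 0 := by
  ext i j
  fin_cases i <;> fin_cases j <;> simp [lineNilpotent, Matrix.mul_apply] <;> ring

theorem lineNilpotent_ne_zero [NoZeroDivisors R] {μ ν : R} (h : μ ≠ 0 ∨ ν ≠ 0) :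
    lineNilpotent μ ν ≠ 0 := by
  intro h0
  have h01 := congrFun₂ h0 0 1
  have h10 := congrFun₂ h0 1 0
  simp [lineNilpotent] at h01 h10
  tauto

end LineNilpotent

theorem eval_zero_apply_of_map_eval_zero {R n : Type*} [CommRing R] [DecidableEq n]
    {M : Matrix n n R[X]} (hM : M.map (evalRingHom 0) = 1) (i j : n) :
    (M i j).eval 0 = (1 : Matrix n n R) i j := by
  simpa using congrFun₂ hM i j

section Unipotent

variable {R : Type*} [CommRing R]

variable (R) in
def sqZeroUnipotents : Set (GL (Fin 2) R[X]) :=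
  { M | ∃ (e : Matrix (Fin 2) (Fin 2) R) (f : R[X]), e ≠ 0 ∧ e * e = 0 ∧
      (M : Matrix (Fin 2) (Fin 2) R[X]) = 1 + (X * f) • e.map C }

theorem isUnit_one_add_smul_map_C {n : Type*} [Fintype n] [DecidableEq n]
    {e : Matrix n n R} (he : e * e = 0) (p : R[X]) : IsUnit (1 + p • e.map C) := by
  refine IsNilpotent.isUnit_one_add ⟨2, ?_⟩
  rw [sq, smul_mul_smul_comm, ← Matrix.map_mul, he, Matrix.map_zero _ (map_zero C), smul_zero]

noncomputable def lineUnipotent (μ ν : R) (f : R[X]) : GL (Fin 2) R[X] :=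
  (isUnit_one_add_smul_map_C (lineNilpotent_mul_self μ ν) (X * f)).unit

theorem coe_lineUnipotent (μ ν : R) (f : R[X]) :
    (lineUnipotent μ ν f : Matrix (Fin 2) (Fin 2) R[X]) =
      1 + (X * f) • (lineNilpotent μ ν).map C :=
  IsUnit.unit_spec _

theorem lineUnipotent_mem [NoZeroDivisors R] {μ ν : R} (h : μ ≠ 0 ∨ ν ≠ 0) (f : R[X]) :
    lineUnipotent μ ν f ∈ sqZeroUnipotents R :=
  ⟨_, f, lineNilpotent_ne_zero h, lineNilpotent_mul_self μ ν, coe_lineUnipotent μ ν f⟩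

theorem lineUnipotent_mul_apply_zero (μ ν : R) (f : R[X]) (M : Matrix (Fin 2) (Fin 2) R[X])
    (i : Fin 2) : ((lineUnipotent μ ν f : Matrix (Fin 2) (Fin 2) R[X]) * M) i 0 =
      M i 0 + C (![μ, ν] i) * (X * f * (C μ * M 1 0 - C ν * M 0 0)) := by
  rw [coe_lineUnipotent]
  fin_cases i <;> simp [Matrix.mul_apply, lineNilpotent] <;> ring

theorem map_eval_zero_lineUnipotent (μ ν : R) (f : R[X]) :
    (lineUnipotent μ ν f : Matrix (Fin 2) (Fin 2) R[X]).map (evalRingHom 0) = 1 := by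
  ext i j
  fin_cases i <;> fin_cases j <;> simp [coe_lineUnipotent]

end Unipotent

theorem mem_sqZeroUnipotents_of_apply_one_zero {R : Type*} [CommRing R] [IsDomain R]
    (G : GL (Fin 2) R[X]) (hG : (G : Matrix (Fin 2) (Fin 2) R[X]).map (evalRingHom 0) = 1)
    (hc : (G : Matrix (Fin 2) (Fin 2) R[X]) 1 0 = 0) : G ∈ sqZeroUnipotents R := by
  set M : Matrix (Fin 2) (Fin 2) R[X] := ↑G with hM
  have hdet : M.det = 1 := by
    refine eq_one_of_isUnit_of_eval_zero ((isUnit_iff_isUnit_det M).mp G.isUnit) ?_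
    rw [← coe_evalRingHom, RingHom.map_det, RingHom.mapMatrix_apply, hG, det_one]
  have had : M 0 0 * M 1 1 = 1 := by simpa [det_fin_two, hc] using hdet
  have ha : M 0 0 = 1 :=
    eq_one_of_isUnit_of_eval_zero (IsUnit.of_mul_eq_one _ had)
      (by simpa using eval_zero_apply_of_map_eval_zero hG 0 0)
  have hd : M 1 1 = 1 := by simpa [ha] using had
  have hb : X * (M 0 1).divX = M 0 1 := by
    simpa [coeff_zero_eq_eval_zero, eval_zero_apply_of_map_eval_zero hG 0 1] using
      X_mul_divX_add (M 0 1)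
  have hG_eq : G = lineUnipotent 1 0 (M 0 1).divX := by
    ext i j
    rw [coe_lineUnipotent]
    fin_cases i <;> fin_cases j <;> simp [lineNilpotent, ← hM, ha, hd, hc, hb]
  exact hG_eq ▸ lineUnipotent_mem (Or.inl one_ne_zero) _

theorem mem_closure_sqZeroUnipotents {K : Type*} [Field K] (G : GL (Fin 2) K[X])
    (hG : (G : Matrix (Fin 2) (Fin 2) K[X]).map (evalRingHom 0) = 1) :
    G ∈ Subgroup.closure (sqZeroUnipotents K) := by
  by_cases hc : (G : Matrix (Fin 2) (Fin 2) K[X]) 1 0 = 0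
  · exact Subgroup.subset_closure (mem_sqZeroUnipotents_of_apply_one_zero G hG hc)
  obtain ⟨μ, ν, hμν, f, hdeg₀, hdeg₁⟩ := exists_reduce_column_degree
    (by simpa using eval_zero_apply_of_map_eval_zero hG 0 0)
    (by simpa using eval_zero_apply_of_map_eval_zero hG 1 0) hc
  have hUG : ((lineUnipotent μ ν f * G : GL (Fin 2) K[X]) : Matrix (Fin 2) (Fin 2) K[X]).map
      (evalRingHom 0) = 1 := by
    rw [Units.val_mul, Matrix.map_mul, map_eval_zero_lineUnipotent, hG, one_mul]
  rw [← inv_mul_cancel_left (lineUnipotent μ ν f) G]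
  exact Subgroup.mul_mem _
    (Subgroup.inv_mem _ (Subgroup.subset_closure (lineUnipotent_mem hμν f)))
    (mem_closure_sqZeroUnipotents _ hUG)
termination_by max ((G : Matrix (Fin 2) (Fin 2) K[X]) 0 0).natDegree
  ((G : Matrix (Fin 2) (Fin 2) K[X]) 1 0).natDegree
decreasing_by
  simp only [Units.val_mul, lineUnipotent_mul_apply_zero]
  exact max_lt hdeg₀ hdeg₁

/-- Let `G ∈ GL(2, K[t])` with `G(0) = id`.  Then `G` lies in the subgroup
generated by the elements of the form `id + t f(t) e`, where `f ∈ K[t]` and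
`e` is a nonzero square-zero `2 × 2` matrix over `K`; i.e. `GL₁(2, K[t])` is
generated by the subgroups `E_δ`, `δ ∈ ℙ¹(K)`. -/
theorem stmt_16 {K : Type*} [Field K] (G : GL (Fin 2) K[X])
    (hG : (G : Matrix (Fin 2) (Fin 2) K[X]).map (evalRingHom 0) = 1) :
    G ∈ Subgroup.closure { M : GL (Fin 2) K[X] |
      ∃ (e : Matrix (Fin 2) (Fin 2) K) (f : K[X]), e ≠ 0 ∧ e * e = 0 ∧
        (M : Matrix (Fin 2) (Fin 2) K[X]) = 1 + (X * f) • e.map C } :=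
  mem_closure_sqZeroUnipotents G hG
end

section
/- Let p be a prime, r ≥ 1, and let A be a commutative ring containing F_p. Let E ⊂ A be an F_p-subspace of dimension r with basis x₁,…,x_r consisting of algebraically independent elements (e.g., A = F_p[x₁,…,x_r]). Then ∑_{u ∈ E} u^(p^r − 1) = ∏_{u ∈ E \ {0}} u. -/
/-!
If `G` is a finite additive subgroup of a field, translating by `g` shows that every Lagrange
denominator `∏_{h ≠ g} (g - h)` equals `c = ∏_{h ≠ 0} (-h)`. Comparing coefficients of
`X ^ (|G| - 1)` in the Lagrange interpolation of `X ^ (|G| - 1)` on the nodes `G` gives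
`∑_{g ∈ G} g ^ (|G| - 1) / c = 1`, and in characteristic `p` the sign `(-1) ^ (p ^ r - 1)`
is `1`. Applied to the `𝔽_p`-span of the variables inside the fraction field of
`𝔽_p[X₁, …, X_r]`, this is an identity of polynomials, which specializes to any family in any
`𝔽_p`-algebra.
-/

open Finset Function Polynomial

theorem AddMonoidHom.prod_sub_erase_eq_prod_neg {G R : Type*} [AddCommGroup G] [Fintype G]
    [DecidableEq G] [CommRing R] (f : G →+ R) (g : G) :
    ∏ h ∈ univ.erase g, (f g - f h) = ∏ h ∈ univ.erase 0, -f h := by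
  refine prod_nbij' (· - g) (· + g) ?_ ?_ ?_ ?_ ?_ <;> intro h hh
  · simpa [sub_eq_zero] using hh
  · simpa [add_eq_zero_iff_eq_neg] using hh
  all_goals simp [map_sub]

theorem AddMonoidHom.sum_pow_card_sub_one_eq_prod_neg {G K : Type*} [AddCommGroup G] [Fintype G]
    [DecidableEq G] [Field K] (f : G →+ K) (hf : Injective f) :
    ∑ g, f g ^ (Fintype.card G - 1) = ∏ g ∈ univ.erase 0, -f g := by
  have hc : ∏ g ∈ univ.erase (0 : G), -f g ≠ 0 := prod_ne_zero_iff.mpr fun g hg =>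
    neg_ne_zero.mpr ((map_ne_zero_iff f hf).mpr (ne_of_mem_erase hg))
  have hdeg : ((X : K[X]) ^ (#(univ : Finset G) - 1)).degree < #(univ : Finset G) := by
    rw [degree_X_pow, Nat.cast_lt]
    exact Nat.sub_lt Fintype.card_pos one_pos
  have h := Lagrange.coeff_eq_sum (v := f) hf.injOn hdeg
  simp only [coeff_X_pow_self, eval_X_pow, f.prod_sub_erase_eq_prod_neg] at h
  rw [← sum_div, eq_div_iff hc, one_mul] at h
  exact h.symm

theorem ZMod.neg_one_pow_prime_pow_sub_one (p n : ℕ) [Fact p.Prime] :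
    (-1 : ZMod p) ^ (p ^ n - 1) = 1 := by
  have h := pow_sub_one_mul (pow_ne_zero n (Fact.out : p.Prime).ne_zero) (-1 : ZMod p)
  rwa [neg_one_pow_char_pow, mul_neg_one, neg_inj] at h

section

variable (p : ℕ) [Fact p.Prime] {ι : Type*} [Fintype ι] [DecidableEq ι]

theorem LinearIndependent.sum_pow_eq_prod_linearCombination {K : Type*} [Field K]
    [Algebra (ZMod p) K] {x : ι → K} (hx : LinearIndependent (ZMod p) x) :
    ∑ w, Fintype.linearCombination (ZMod p) x w ^ (p ^ Fintype.card ι - 1) =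
      ∏ w ∈ univ.erase 0, Fintype.linearCombination (ZMod p) x w := by
  set f := Fintype.linearCombination (ZMod p) x
  have hf : Injective f := linearIndependent_iff_injective_fintypeLinearCombination.mp hx
  have hcard : Fintype.card (ι → ZMod p) = p ^ Fintype.card ι := by simp
  have hsign : (-1 : K) ^ (p ^ Fintype.card ι - 1) = 1 := by
    simpa using congrArg (algebraMap (ZMod p) K)
      (ZMod.neg_one_pow_prime_pow_sub_one p (Fintype.card ι))
  rw [← hcard, ← f.toAddMonoidHom_coe, f.toAddMonoidHom.sum_pow_card_sub_one_eq_prod_neg hf,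
    prod_neg, card_erase_of_mem (mem_univ _), card_univ, hcard, hsign, one_mul]

theorem MvPolynomial.sum_pow_eq_prod_linearCombination_X :
    ∑ w, Fintype.linearCombination (ZMod p) (X : ι → MvPolynomial ι (ZMod p)) w
        ^ (p ^ Fintype.card ι - 1) =
      ∏ w ∈ univ.erase 0,
        Fintype.linearCombination (ZMod p) (X : ι → MvPolynomial ι (ZMod p)) w := by
  let φ := IsScalarTower.toAlgHom (ZMod p) (MvPolynomial ι (ZMod p))
    (FractionRing (MvPolynomial ι (ZMod p)))
  have hφ : Injective φ := IsFractionRing.injective _ _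
  apply hφ
  have hX := (linearIndependent_X ι (ZMod p)).map' φ.toLinearMap (LinearMap.ker_eq_bot.mpr hφ)
  simpa [map_sum, map_prod, Fintype.linearCombination_apply]
    using hX.sum_pow_eq_prod_linearCombination

theorem sum_pow_eq_prod_linearCombination {A : Type*} [CommRing A] [Algebra (ZMod p) A]
    (x : ι → A) :
    ∑ w, Fintype.linearCombination (ZMod p) x w ^ (p ^ Fintype.card ι - 1) =
      ∏ w ∈ univ.erase 0, Fintype.linearCombination (ZMod p) x w := by
  simpa [map_sum, map_prod, Fintype.linearCombination_apply]
    using congrArg (MvPolynomial.aeval x) (MvPolynomial.sum_pow_eq_prod_linearCombination_X p)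

end

theorem stmt_17_general (p r : ℕ) [Fact p.Prime]
    {A : Type*} [CommRing A] [Algebra (ZMod p) A]
    (x : Fin r → A) :
    ∑ w : Fin r → ZMod p, (∑ i, w i • x i) ^ (p ^ r - 1) =
      ∏ w ∈ Finset.univ.filter (fun w : Fin r → ZMod p => w ≠ 0),
        ∑ i, w i • x i := by
  simpa [Fintype.linearCombination_apply, filter_ne'] using sum_pow_eq_prod_linearCombination p x

/-- Let `p` be a prime, `r ≥ 1`, `A` a commutative ring containing `𝔽_p` and
`x₁, …, x_r ∈ A` algebraically independent over `𝔽_p`.  With `E` the set of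
`𝔽_p`-linear combinations of the `xᵢ`, one has
`∑_{u ∈ E} u ^ (p^r - 1) = ∏_{u ∈ E, u ≠ 0} u`. -/
theorem stmt_17 (p r : ℕ) [Fact p.Prime] (hr : 1 ≤ r)
    {A : Type*} [CommRing A] [Algebra (ZMod p) A]
    (x : Fin r → A) (hx : AlgebraicIndependent (ZMod p) x) :
    ∑ w : Fin r → ZMod p, (∑ i, w i • x i) ^ (p ^ r - 1) =
      ∏ w ∈ Finset.univ.filter (fun w : Fin r → ZMod p => w ≠ 0),
        ∑ i, w i • x i :=
  stmt_17_general p r x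
end
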